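/- Let V ∈ H₊^{−mα} for some α ∈ [0,1], and let u ∈ H₊^m satisfy D₊^{2m}u + V·u ∈ L²(0,1). Then u ∈ H₊^{m(2−α)}. -/
import Mathlib

noncomputable section
open Complex

def wtp (s : ℝ) (k : ℤ) : ℝ := ((1 + |(2 * k : ℤ)| : ℝ)) ^ (2 * s)

def conv (a b : ℤ → ℂ) (k : ℤ) : ℂ := ∑' j : ℤ, a (k - j) * b j

open ENNReal NNReal

namespace Reg

def WW (k : ℤ) : ℝ≥0∞ := ((1 + 2 * k.natAbs : ℕ) : ℝ≥0∞)

lemma one_le_WW (k : ℤ) : 1 ≤ WW k := by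
  have : (1:ℕ) ≤ 1 + 2 * k.natAbs := Nat.le_add_right _ _
  unfold WW
  exact_mod_cast this

lemma WW_ne_zero (k : ℤ) : WW k ≠ 0 :=
  (lt_of_lt_of_le zero_lt_one (one_le_WW k)).ne'

lemma WW_ne_top (k : ℤ) : WW k ≠ ⊤ := natCast_ne_top _

lemma WW_rpow_ne_top (k : ℤ) (s : ℝ) : WW k ^ s ≠ ⊤ := by
  simp [ENNReal.rpow_eq_top_iff, WW_ne_zero k, WW_ne_top k]

lemma WW_rpow_ne_zero (k : ℤ) (s : ℝ) : WW k ^ s ≠ 0 := by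
  simp [ENNReal.rpow_eq_zero_iff, WW_ne_zero k, WW_ne_top k]

lemma WW_rpow_add (k : ℤ) (a b : ℝ) : WW k ^ (a + b) = WW k ^ a * WW k ^ b :=
  ENNReal.rpow_add a b (WW_ne_zero k) (WW_ne_top k)

lemma WW_rpow_sq (k : ℤ) (a : ℝ) : (WW k ^ a) ^ 2 = WW k ^ (2 * a) := by
  rw [sq, ← WW_rpow_add]; ring_nf

lemma WW_rpow_cancel (k : ℤ) (a : ℝ) (x : ℝ≥0∞) : WW k ^ a * (WW k ^ (-a) * x) = x := by
  rw [← mul_assoc, ← WW_rpow_add]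
  simp

lemma WW_rpow_le_one (k : ℤ) {s : ℝ} (hs : s ≤ 0) : WW k ^ s ≤ 1 := by
  calc WW k ^ s ≤ WW k ^ (0:ℝ) := rpow_le_rpow_of_exponent_le (one_le_WW k) hs
  _ = 1 := by simp

lemma WW_mono_exp (k : ℤ) {a b : ℝ} (h : a ≤ b) : WW k ^ a ≤ WW k ^ b :=
  rpow_le_rpow_of_exponent_le (one_le_WW k) h

lemma WW_sub_add (k j : ℤ) : WW (k - j) ≤ WW k + WW j := by
  have h := Int.natAbs_sub_le k j
  have : (1 + 2 * (k-j).natAbs : ℕ) ≤ (1 + 2*k.natAbs) + (1 + 2*j.natAbs) := by omega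
  calc WW (k-j) = ((1 + 2 * (k-j).natAbs : ℕ) : ℝ≥0∞) := rfl
  _ ≤ (((1 + 2*k.natAbs) + (1 + 2*j.natAbs) : ℕ) : ℝ≥0∞) := by exact_mod_cast Nat.cast_le.2 this
  _ = WW k + WW j := by push_cast [WW]; ring

lemma WW_peetre (k j : ℤ) {s : ℝ} (hs : 0 ≤ s) :
    WW (k - j) ^ s ≤ 2 ^ s * (WW k ^ s + WW j ^ s) := by
  have h1 : WW (k - j) ≤ 2 * max (WW k) (WW j) := by
    calc WW (k-j) ≤ WW k + WW j := WW_sub_add k j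
    _ ≤ max (WW k) (WW j) + max (WW k) (WW j) := add_le_add (le_max_left _ _) (le_max_right _ _)
    _ = 2 * max (WW k) (WW j) := (two_mul _).symm
  calc WW (k-j) ^ s ≤ (2 * max (WW k) (WW j)) ^ s := ENNReal.rpow_le_rpow h1 hs
  _ = 2 ^ s * (max (WW k) (WW j)) ^ s := ENNReal.mul_rpow_of_nonneg _ _ hs
  _ ≤ 2 ^ s * (WW k ^ s + WW j ^ s) := by
      gcongr
      rcases max_cases (WW k) (WW j) with ⟨h, _⟩ | ⟨h, _⟩ <;> rw [h]
      · exact le_add_right le_rfl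
      · exact le_add_self

/-- p-series over ℤ in `ℝ≥0∞` -/
lemma tsum_WW_rpow_ne_top {r : ℝ} (hr : 1 < r) : ∑' k : ℤ, WW k ^ (-r) ≠ ⊤ := by
  have base : Summable (fun n : ℕ => ((n : ℝ)) ^ (-r)) :=
    Real.summable_nat_rpow.2 (by linarith)
  have shift : Summable (fun n : ℕ => (((n : ℝ) + 1)) ^ (-r)) := by
    have := (summable_nat_add_iff (f := fun n : ℕ => ((n : ℝ)) ^ (-r)) 1).2 base
    simpa [Nat.cast_add] using this
  have key : Summable (fun n : ℕ => ((1 + 2 * n : ℕ) : ℝ) ^ (-r)) := by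
    apply Summable.of_nonneg_of_le (fun n => Real.rpow_nonneg (by positivity) _) _ shift
    intro n
    apply Real.rpow_le_rpow_of_nonpos (by positivity) _ (by linarith)
    push_cast; linarith [Nat.cast_nonneg (α := ℝ) n]
  have hZ : Summable (fun k : ℤ => ((1 + 2 * k.natAbs : ℕ) : ℝ) ^ (-r)) := by
    rw [summable_int_iff_summable_nat_and_neg]
    constructor <;> simpa using key
  -- convert to ℝ≥0∞
  have hNN : Summable (fun k : ℤ => ((1 + 2 * k.natAbs : ℕ) : ℝ≥0) ^ (-r)) := by
    rw [← NNReal.summable_coe]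
    refine hZ.congr fun k => ?_
    rw [NNReal.coe_rpow]; norm_num
  have hfin := ENNReal.tsum_coe_ne_top_iff_summable.2 hNN
  have heq : ∀ k : ℤ, WW k ^ (-r) = ((((1 + 2 * k.natAbs : ℕ) : ℝ≥0) ^ (-r) : ℝ≥0) : ℝ≥0∞) := by
    intro k
    rw [ENNReal.coe_rpow_of_ne_zero (by positivity)]
    unfold WW
    norm_num
  rw [tsum_congr heq]
  exact hfin

lemma sq_add_le (x y : ℝ≥0∞) : (x + y)^2 ≤ 4*(x^2) + 4*(y^2) := by
  have h1 : x + y ≤ 2 * max x y :=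
    calc x + y ≤ max x y + max x y := add_le_add (le_max_left _ _) (le_max_right _ _)
    _ = 2 * max x y := (two_mul _).symm
  calc (x+y)^2 ≤ (2 * max x y)^2 := by gcongr
  _ = 4 * (max x y)^2 := by ring
  _ ≤ 4 * (x^2 + y^2) := by
      gcongr
      rcases max_cases x y with ⟨h, _⟩ | ⟨h, _⟩ <;> rw [h]
      · exact le_add_right le_rfl
      · exact le_add_self
  _ = _ := by ring

lemma mul_le_sq_add_sq (x y : ℝ≥0∞) : x * y ≤ x^2 + y^2 := by
  rcases le_total x y with h|h
  · calc x*y ≤ y*y := mul_le_mul_left h y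
    _ = y^2 := (sq y).symm
    _ ≤ _ := le_add_self
  · calc x*y ≤ x*x := mul_le_mul_right h x
    _ = x^2 := (sq x).symm
    _ ≤ _ := le_add_right le_rfl

/-- ℓ¹ bound via AM-GM: ∑ x*y ≤ ∑x² + ∑y² -/
lemma tsum_mul_le_sq_add_sq (x y : ℤ → ℝ≥0∞) :
    ∑' j, x j * y j ≤ (∑' j, (x j)^2) + (∑' j, (y j)^2) := by
  rw [← ENNReal.tsum_add]
  exact ENNReal.tsum_le_tsum fun j => mul_le_sq_add_sq _ _

/-- Young's inequality ℓ² * ℓ¹ → ℓ² (with constant 2), in ℝ≥0∞. -/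
lemma young (a c : ℤ → ℝ≥0∞) :
    ∑' k, (∑' j, a (k - j) * c j)^2 ≤ 2 * ((∑' n, (a n)^2) * (∑' j, c j)^2) := by
  have expand : ∀ k : ℤ, (∑' j, a (k - j) * c j)^2
      = ∑' j, ∑' i, (a (k-j) * c j) * (a (k-i) * c i) := by
    intro k
    rw [sq, ← ENNReal.tsum_mul_right]
    exact tsum_congr fun j => (ENNReal.tsum_mul_left).symm
  have trans_inv : ∀ j : ℤ, ∑' k : ℤ, (a (k - j))^2 = ∑' n, (a n)^2 := by
    intro j
    exact (Equiv.subRight j).tsum_eq (fun n => (a n)^2)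
  calc ∑' k, (∑' j, a (k - j) * c j)^2
      = ∑' k, ∑' j, ∑' i, (a (k-j) * c j) * (a (k-i) * c i) := tsum_congr expand
    _ ≤ ∑' k, ∑' j, ∑' i, ((a (k-j))^2 + (a (k-i))^2) * (c j * c i) := by
        refine ENNReal.tsum_le_tsum fun k => ENNReal.tsum_le_tsum fun j =>
          ENNReal.tsum_le_tsum fun i => ?_
        calc (a (k-j) * c j) * (a (k-i) * c i) = (a (k-j) * a (k-i)) * (c j * c i) := by ring
        _ ≤ ((a (k-j))^2 + (a (k-i))^2) * (c j * c i) := by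
            gcongr
            exact mul_le_sq_add_sq _ _
    _ = ∑' j, ∑' i, ∑' k, ((a (k-j))^2 + (a (k-i))^2) * (c j * c i) := by
        rw [ENNReal.tsum_comm (f := fun k j => ∑' i, ((a (k-j))^2 + (a (k-i))^2) * (c j * c i))]
        exact tsum_congr fun j =>
          ENNReal.tsum_comm (f := fun k i => ((a (k-j))^2 + (a (k-i))^2) * (c j * c i))
    _ = ∑' j, ∑' i, (2 * ∑' n, (a n)^2) * (c j * c i) := by
        refine tsum_congr fun j => tsum_congr fun i => ?_
        rw [ENNReal.tsum_mul_right, ENNReal.tsum_add, trans_inv j, trans_inv i, two_mul]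
    _ = ∑' j, ((2 * ∑' n, (a n)^2) * c j) * (∑' i, c i) := by
        refine tsum_congr fun j => ?_
        calc ∑' i, (2 * ∑' n, (a n)^2) * (c j * c i)
            = ∑' i, ((2 * ∑' n, (a n)^2) * c j) * c i := tsum_congr fun i => by ring
          _ = _ := ENNReal.tsum_mul_left
    _ = ((2 * ∑' n, (a n)^2) * (∑' i, c i)) * (∑' j, c j) := by
        calc ∑' j, ((2 * ∑' n, (a n)^2) * c j) * (∑' i, c i)
            = ∑' j, ((2 * ∑' n, (a n)^2) * (∑' i, c i)) * c j := tsum_congr fun j => by ring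
          _ = _ := ENNReal.tsum_mul_left
    _ = _ := by rw [sq]; ring



def eN (f : ℤ → ℂ) (k : ℤ) : ℝ≥0∞ := (‖f k‖₊ : ℝ≥0∞)

lemma eN_ne_top (f : ℤ → ℂ) (k : ℤ) : eN f k ≠ ⊤ := coe_ne_top

/-- Core convolution estimate: `V ∈ H^{-s}`, `u ∈ H^{t}`, `0 ≤ s ≤ t`, `1 ≤ t`,
and `1/2 < s` or `1/2 < t - s` imply `V * u ∈ H^{-s}` (ENNReal form). -/
lemma conv_bound {V u : ℤ → ℂ} {s t : ℝ} (hs : 0 ≤ s) (hst : s ≤ t) (ht : 1 ≤ t)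
    (hd : 1/2 < s ∨ 1/2 < t - s)
    (HV : ∑' k, WW k ^ (-(2*s)) * (eN V k)^2 ≠ ⊤)
    (HU : ∑' k, WW k ^ (2*t) * (eN u k)^2 ≠ ⊤) :
    ∑' k : ℤ, WW k ^ (-(2*s)) * (∑' j : ℤ, eN V (k-j) * eN u j)^2 ≠ ⊤ := by
  set a : ℤ → ℝ≥0∞ := fun n => WW n ^ (-s) * eN V n with ha_def
  set b : ℤ → ℝ≥0∞ := fun n => WW n ^ t * eN u n with hb_def
  have ha2 : ∑' n, (a n)^2 ≠ ⊤ := by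
    have : ∀ n : ℤ, (a n)^2 = WW n ^ (-(2*s)) * (eN V n)^2 := by
      intro n
      rw [ha_def]
      simp only [mul_pow, WW_rpow_sq]
      ring_nf
    rw [tsum_congr this]; exact HV
  have hb2 : ∑' n, (b n)^2 ≠ ⊤ := by
    have : ∀ n : ℤ, (b n)^2 = WW n ^ (2*t) * (eN u n)^2 := by
      intro n
      rw [hb_def]
      simp only [mul_pow, WW_rpow_sq]
    rw [tsum_congr this]; exact HU
  have heV : ∀ n : ℤ, eN V n = WW n ^ s * a n := by
    intro n; rw [ha_def]; simp only; rw [WW_rpow_cancel]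
  have heU : ∀ n : ℤ, eN u n = WW n ^ (-t) * b n := by
    intro n; rw [hb_def]; simp only [← mul_assoc, ← WW_rpow_add]; simp
  -- the two ℓ¹-type sequences
  set c1 : ℤ → ℝ≥0∞ := fun j => WW j ^ (-t) * b j with hc1_def
  set c2 : ℤ → ℝ≥0∞ := fun j => WW j ^ (s - t) * b j with hc2_def
  have hc1 : ∑' j, c1 j ≠ ⊤ := by
    refine ne_top_of_le_ne_top ?_ (tsum_mul_le_sq_add_sq (fun j => WW j ^ (-t)) b)
    rw [tsum_congr (fun j => WW_rpow_sq j (-t))]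
    have h1 : ∑' j : ℤ, WW j ^ (2 * (-t)) ≠ ⊤ := by
      have : 2 * (-t) = -(2*t) := by ring
      rw [this]
      exact tsum_WW_rpow_ne_top (by linarith)
    exact ENNReal.add_ne_top.2 ⟨h1, hb2⟩
  -- main pointwise bound
  set P : ℤ → ℝ≥0∞ := fun k => ∑' j, a (k - j) * c1 j with hP_def
  set Q : ℤ → ℝ≥0∞ := fun k => ∑' j, a (k - j) * c2 j with hQ_def
  have main : ∀ k : ℤ, WW k ^ (-s) * (∑' j, eN V (k-j) * eN u j)
      ≤ 2 ^ s * P k + 2 ^ s * (WW k ^ (-s) * Q k) := by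
    intro k
    have inner : (∑' j, eN V (k-j) * eN u j)
        ≤ 2 ^ s * (WW k ^ s * P k) + 2 ^ s * Q k := by
      calc ∑' j, eN V (k-j) * eN u j
          = ∑' j, WW (k-j) ^ s * (a (k-j) * c1 j) := by
            refine tsum_congr fun j => ?_
            rw [heV, heU]
            rw [hc1_def]
            ring
        _ ≤ ∑' j, (2 ^ s * (WW k ^ s + WW j ^ s)) * (a (k-j) * c1 j) := by
            refine ENNReal.tsum_le_tsum fun j => ?_
            gcongr
            exact WW_peetre k j hs
        _ = ∑' j, (2 ^ s * WW k ^ s * (a (k-j) * c1 j) + 2 ^ s * (a (k-j) * (WW j ^ s * c1 j))) := by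
            refine tsum_congr fun j => ?_
            ring
        _ = 2 ^ s * WW k ^ s * P k + 2 ^ s * Q k := by
            have hcc : ∀ j : ℤ, WW j ^ s * c1 j = c2 j := by
              intro j; rw [hc1_def, hc2_def]; simp only
              rw [← mul_assoc, ← WW_rpow_add, show s + -t = s - t by ring]
            rw [ENNReal.tsum_add]
            congr 1
            · rw [hP_def]; simp only; rw [← ENNReal.tsum_mul_left]
            · rw [hQ_def]; simp only; rw [← ENNReal.tsum_mul_left]
              exact tsum_congr fun j => by rw [← hcc j]
        _ = 2 ^ s * (WW k ^ s * P k) + 2 ^ s * Q k := by ring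
    calc WW k ^ (-s) * (∑' j, eN V (k-j) * eN u j)
        ≤ WW k ^ (-s) * (2 ^ s * (WW k ^ s * P k) + 2 ^ s * Q k) := by gcongr
      _ = 2 ^ s * (WW k ^ (-s) * (WW k ^ s * P k)) + 2 ^ s * (WW k ^ (-s) * Q k) := by ring
      _ = 2 ^ s * P k + 2 ^ s * (WW k ^ (-s) * Q k) := by
          rw [show ∀ x, WW k ^ (-s) * (WW k ^ s * x) = x from fun x => by
            rw [← mul_assoc, ← WW_rpow_add]; simp]
    -- done
  -- sum of squares of P
  have hPsum : ∑' k, (P k)^2 ≠ ⊤ := by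
    refine ne_top_of_le_ne_top ?_ (young a c1)
    exact mul_ne_top (by norm_num) (mul_ne_top ha2 (by
      exact pow_ne_top hc1))
  -- sum of squares of the Q-term
  have hQsum : ∑' k, (WW k ^ (-s) * Q k)^2 ≠ ⊤ := by
    rcases hd with hd1 | hd2
    · -- s > 1/2 : Q is uniformly bounded, use summability of WW^(-2s)
      set M : ℝ≥0∞ := (∑' n, (a n)^2) + (∑' n, (b n)^2) with hM_def
      have hM : M ≠ ⊤ := ENNReal.add_ne_top.2 ⟨ha2, hb2⟩
      have hQb : ∀ k, Q k ≤ M := by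
        intro k
        rw [hQ_def]
        calc ∑' j, a (k - j) * c2 j ≤ (∑' j, (a (k-j))^2) + (∑' j, (c2 j)^2) :=
              tsum_mul_le_sq_add_sq _ _
        _ ≤ (∑' n, (a n)^2) + (∑' n, (b n)^2) := by
            refine add_le_add (le_of_eq ((Equiv.subLeft k).tsum_eq (fun n => (a n)^2)))
              (ENNReal.tsum_le_tsum fun j => ?_)
            have hb : c2 j ≤ b j := by
              rw [hc2_def]
              calc WW j ^ (s-t) * b j ≤ 1 * b j := by
                    gcongr
                    exact WW_rpow_le_one j (by linarith)
                _ = b j := one_mul _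
            gcongr
      have hb1 : ∀ k : ℤ, (WW k ^ (-s) * Q k)^2 ≤ WW k ^ (-(2*s)) * M^2 := by
        intro k
        rw [mul_pow, WW_rpow_sq]
        rw [show 2 * (-s) = -(2*s) by ring]
        gcongr
        exact hQb k
      refine ne_top_of_le_ne_top ?_ (ENNReal.tsum_le_tsum hb1)
      rw [ENNReal.tsum_mul_right]
      exact mul_ne_top (tsum_WW_rpow_ne_top (by linarith)) (pow_ne_top hM)
    · -- t - s > 1/2 : c2 ∈ ℓ¹, use Young
      have hc2 : ∑' j, c2 j ≠ ⊤ := by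
        refine ne_top_of_le_ne_top ?_ (tsum_mul_le_sq_add_sq (fun j => WW j ^ (s-t)) b)
        rw [tsum_congr (fun j => WW_rpow_sq j (s-t))]
        have h1 : ∑' j : ℤ, WW j ^ (2 * (s-t)) ≠ ⊤ := by
          have : 2 * (s-t) = -(2*(t-s)) := by ring
          rw [this]
          exact tsum_WW_rpow_ne_top (by linarith)
        exact ENNReal.add_ne_top.2 ⟨h1, hb2⟩
      have hQsq : ∑' k, (Q k)^2 ≠ ⊤ := by
        refine ne_top_of_le_ne_top ?_ (young a c2)
        exact mul_ne_top (by norm_num) (mul_ne_top ha2 (pow_ne_top hc2))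
      refine ne_top_of_le_ne_top hQsq (ENNReal.tsum_le_tsum fun k => ?_)
      gcongr
      calc WW k ^ (-s) * Q k ≤ 1 * Q k := by
            gcongr
            exact WW_rpow_le_one k (by linarith)
        _ = Q k := one_mul _
  -- combine
  set C : ℝ≥0∞ := 4 * (2 ^ s)^2 with hC_def
  have hC : C ≠ ⊤ := by
    refine mul_ne_top (by norm_num) (pow_ne_top ?_)
    simp [ENNReal.rpow_eq_top_iff]
  have final : ∀ k : ℤ, WW k ^ (-(2*s)) * (∑' j, eN V (k-j) * eN u j)^2
      ≤ C * (P k)^2 + C * (WW k ^ (-s) * Q k)^2 := by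
    intro k
    have e1 : WW k ^ (-(2*s)) * (∑' j, eN V (k-j) * eN u j)^2
        = (WW k ^ (-s) * (∑' j, eN V (k-j) * eN u j))^2 := by
      rw [mul_pow, WW_rpow_sq]
      ring_nf
    rw [e1]
    calc (WW k ^ (-s) * (∑' j, eN V (k-j) * eN u j))^2
        ≤ (2 ^ s * P k + 2 ^ s * (WW k ^ (-s) * Q k))^2 := by
          gcongr
          exact main k
      _ ≤ 4 * (2 ^ s * P k)^2 + 4 * (2 ^ s * (WW k ^ (-s) * Q k))^2 := sq_add_le _ _
      _ = C * (P k)^2 + C * (WW k ^ (-s) * Q k)^2 := by rw [hC_def]; ring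
  refine ne_top_of_le_ne_top ?_ (ENNReal.tsum_le_tsum final)
  rw [ENNReal.tsum_add, ENNReal.tsum_mul_left, ENNReal.tsum_mul_left]
  exact ENNReal.add_ne_top.2 ⟨mul_ne_top hC hPsum, mul_ne_top hC hQsum⟩


lemma step (m : ℕ) (V u : ℤ → ℂ) (s t : ℝ) (hs : 0 ≤ s) (hst : s ≤ t) (ht : 1 ≤ t)
    (hd : 1/2 < s ∨ 1/2 < t - s)
    (HV : ∑' k, WW k ^ (-(2*s)) * (eN V k)^2 ≠ ⊤)
    (HU : ∑' k, WW k ^ (2*t) * (eN u k)^2 ≠ ⊤)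
    (HF : ∑' k : ℤ, (eN (fun k : ℤ =>
        (((2 * Real.pi * (k : ℝ)) ^ (2 * m) : ℝ) : ℂ) * u k + conv V u k) k)^2 ≠ ⊤) :
    ∑' k, WW k ^ (2*(2*(m:ℝ) - s)) * (eN u k)^2 ≠ ⊤ := by
  set F : ℤ → ℂ := fun k : ℤ =>
    (((2 * Real.pi * (k : ℝ)) ^ (2 * m) : ℝ) : ℂ) * u k + conv V u k with hF_def
  set Ck : ℤ → ℝ≥0∞ := fun k => ∑' j : ℤ, eN V (k-j) * eN u j with hCk_def
  have hconv := conv_bound hs hst ht hd HV HU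
  have hCk_ne_top : ∀ k, Ck k ≠ ⊤ := by
    intro k
    intro htop
    apply hconv
    have h1 : WW k ^ (-(2*s)) * (Ck k)^2 = ⊤ := by
      rw [htop]
      rw [ENNReal.top_pow (by norm_num), ENNReal.mul_top (WW_rpow_ne_zero k _)]
    refine eq_top_iff.2 ?_
    rw [← h1]
    exact ENNReal.le_tsum k
  -- bound the norm of the convolution
  have hcN : ∀ k, (‖conv V u k‖₊ : ℝ≥0∞) ≤ Ck k := by
    intro k
    have hsummable : Summable (fun j : ℤ => ‖V (k-j) * u j‖₊) := by
      rw [← ENNReal.tsum_coe_ne_top_iff_summable]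
      have : ∀ j : ℤ, ((‖V (k-j) * u j‖₊ : ℝ≥0) : ℝ≥0∞) = eN V (k-j) * eN u j := by
        intro j
        rw [nnnorm_mul, ENNReal.coe_mul]
        rfl
      rw [tsum_congr this]
      exact hCk_ne_top k
    have h2 : ‖conv V u k‖₊ ≤ ∑' j, ‖V (k-j) * u j‖₊ := nnnorm_tsum_le hsummable
    calc ((‖conv V u k‖₊ : ℝ≥0) : ℝ≥0∞) ≤ ((∑' j, ‖V (k-j) * u j‖₊ : ℝ≥0) : ℝ≥0∞) := by
          exact_mod_cast h2
      _ = ∑' j, ((‖V (k-j) * u j‖₊ : ℝ≥0) : ℝ≥0∞) := ENNReal.coe_tsum hsummable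
      _ = Ck k := by
          refine tsum_congr fun j => ?_
          rw [nnnorm_mul, ENNReal.coe_mul]
          rfl
  -- the elliptic estimate for k ≠ 0
  have hell : ∀ k : ℤ, k ≠ 0 → WW k ^ ((2*m : ℕ) : ℝ) * eN u k ≤ eN F k + Ck k := by
    intro k hk
    have hr : ((1 + 2*k.natAbs : ℕ) : ℝ) ^ (2*m) * ‖u k‖ ≤ ‖F k‖ + ‖conv V u k‖ := by
      have habs : |(2 * Real.pi * (k : ℝ)) ^ (2*m)| = (2 * Real.pi * |(k:ℝ)|) ^ (2*m) := by
        rw [_root_.abs_pow, abs_mul, _root_.abs_of_nonneg (by positivity : (0:ℝ) ≤ 2 * Real.pi)]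
      have hbase : ((1 + 2*k.natAbs : ℕ) : ℝ) ≤ 2 * Real.pi * |(k:ℝ)| := by
        have h1 : (1:ℝ) ≤ |(k:ℝ)| := by
          rw [← Int.cast_abs]
          exact_mod_cast Int.one_le_abs (by exact_mod_cast hk)
        have hpi : (3:ℝ) ≤ Real.pi := by
          linarith [Real.pi_gt_three]
        have : ((1 + 2*k.natAbs : ℕ) : ℝ) = 1 + 2 * |(k:ℝ)| := by
          push_cast [Nat.cast_natAbs]
          try rfl
          try norm_num
          try simp
        rw [this]
        nlinarith [abs_nonneg ((k:ℝ))]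
      have hpow : ((1 + 2*k.natAbs : ℕ) : ℝ) ^ (2*m) ≤ |(2 * Real.pi * (k : ℝ)) ^ (2*m)| := by
        rw [habs]
        exact pow_le_pow_left₀ (by positivity) hbase _
      have heqF : (((2 * Real.pi * (k : ℝ)) ^ (2 * m) : ℝ) : ℂ) * u k = F k - conv V u k := by
        rw [hF_def]; ring
      calc ((1 + 2*k.natAbs : ℕ) : ℝ) ^ (2*m) * ‖u k‖
          ≤ |(2 * Real.pi * (k : ℝ)) ^ (2*m)| * ‖u k‖ :=
            mul_le_mul_of_nonneg_right hpow (norm_nonneg _)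
        _ = ‖(((2 * Real.pi * (k : ℝ)) ^ (2 * m) : ℝ) : ℂ) * u k‖ := by
            rw [norm_mul, Complex.norm_real, Real.norm_eq_abs]
        _ = ‖F k - conv V u k‖ := by rw [heqF]
        _ ≤ ‖F k‖ + ‖conv V u k‖ := norm_sub_le _ _
    have hnn : ((1 + 2*k.natAbs : ℕ) : ℝ≥0) ^ (2*m) * ‖u k‖₊ ≤ ‖F k‖₊ + ‖conv V u k‖₊ := by
      rw [← NNReal.coe_le_coe]
      push_cast
      push_cast at hr
      exact hr
    have henn : ((((1 + 2*k.natAbs : ℕ) : ℝ≥0) ^ (2*m) * ‖u k‖₊ : ℝ≥0) : ℝ≥0∞)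
        ≤ ((‖F k‖₊ + ‖conv V u k‖₊ : ℝ≥0) : ℝ≥0∞) := by exact_mod_cast hnn
    rw [ENNReal.coe_mul, ENNReal.coe_pow, ENNReal.coe_add] at henn
    calc WW k ^ ((2*m : ℕ) : ℝ) * eN u k
        = WW k ^ (2*m : ℕ) * eN u k := by rw [ENNReal.rpow_natCast]
      _ = (((1 + 2*k.natAbs : ℕ) : ℝ≥0) : ℝ≥0∞) ^ (2*m) * eN u k := by
          simp only [WW]
          norm_cast
      _ ≤ (‖F k‖₊ : ℝ≥0∞) + (‖conv V u k‖₊ : ℝ≥0∞) := henn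
      _ ≤ eN F k + Ck k := by
          gcongr
          · exact le_rfl
          · exact hcN k
  -- pointwise squared bound away from 0
  have hpt : ∀ k : ℤ, k ≠ 0 → WW k ^ (2*(2*(m:ℝ) - s)) * (eN u k)^2
      ≤ 4 * (eN F k)^2 + 4 * (WW k ^ (-s) * Ck k)^2 := by
    intro k hk
    have e1 : WW k ^ (2*(2*(m:ℝ) - s)) * (eN u k)^2 = (WW k ^ (2*(m:ℝ) - s) * eN u k)^2 := by
      rw [mul_pow, WW_rpow_sq]
    rw [e1]
    have e2 : WW k ^ (2*(m:ℝ) - s) * eN u k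
        = WW k ^ (-s) * (WW k ^ ((2*m : ℕ) : ℝ) * eN u k) := by
      rw [← mul_assoc, ← WW_rpow_add]
      congr 2
      push_cast
      ring
    have e3 : WW k ^ (2*(m:ℝ) - s) * eN u k ≤ eN F k + WW k ^ (-s) * Ck k := by
      rw [e2]
      calc WW k ^ (-s) * (WW k ^ ((2*m : ℕ) : ℝ) * eN u k)
          ≤ WW k ^ (-s) * (eN F k + Ck k) := by
            gcongr
            exact hell k hk
        _ = WW k ^ (-s) * eN F k + WW k ^ (-s) * Ck k := by ring
        _ ≤ 1 * eN F k + WW k ^ (-s) * Ck k := by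
            gcongr
            exact WW_rpow_le_one k (by linarith)
        _ = eN F k + WW k ^ (-s) * Ck k := by rw [one_mul]
    calc (WW k ^ (2*(m:ℝ) - s) * eN u k)^2 ≤ (eN F k + WW k ^ (-s) * Ck k)^2 := by
          gcongr
      _ ≤ _ := sq_add_le _ _
  -- assemble the global sum
  have hglob : ∀ k : ℤ, WW k ^ (2*(2*(m:ℝ) - s)) * (eN u k)^2
      ≤ (if k = 0 then WW 0 ^ (2*(2*(m:ℝ) - s)) * (eN u 0)^2 else 0)
        + (4 * (eN F k)^2 + 4 * (WW k ^ (-s) * Ck k)^2) := by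
    intro k
    by_cases hk : k = 0
    · subst hk
      simp only [if_pos rfl]
      exact le_add_right le_rfl
    · rw [if_neg hk, zero_add]
      exact hpt k hk
  refine ne_top_of_le_ne_top ?_ (ENNReal.tsum_le_tsum hglob)
  rw [ENNReal.tsum_add]
  refine ENNReal.add_ne_top.2 ⟨?_, ?_⟩
  · rw [tsum_ite_eq]
    have : WW (0:ℤ) = 1 := by unfold WW; norm_num
    rw [this, ENNReal.one_rpow, one_mul]
    exact pow_ne_top coe_ne_top
  · rw [ENNReal.tsum_add, ENNReal.tsum_mul_left, ENNReal.tsum_mul_left]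
    refine ENNReal.add_ne_top.2 ⟨mul_ne_top (by norm_num) HF, mul_ne_top (by norm_num) ?_⟩
    have : ∀ k : ℤ, (WW k ^ (-s) * Ck k)^2 = WW k ^ (-(2*s)) * (Ck k)^2 := by
      intro k
      rw [mul_pow, WW_rpow_sq]
      congr 2
      ring
    rw [tsum_congr this]
    exact hconv


lemma summable_iff_tsum_ne_top (s : ℝ) (f : ℤ → ℂ) :
    Summable (fun k : ℤ => wtp s k * ‖f k‖ ^ 2) ↔ ∑' k, WW k ^ (2*s) * (eN f k)^2 ≠ ⊤ := by
  have hb : ∀ k : ℤ, ((1 + 2*k.natAbs : ℕ) : ℝ) = ((1 + |(2 * k : ℤ)| : ℝ)) := by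
    intro k
    push_cast [Nat.cast_natAbs]
    rw [abs_mul]
    norm_num
  have h1 : ∀ k : ℤ, wtp s k * ‖f k‖ ^ 2
      = ((((1 + 2*k.natAbs : ℕ) : ℝ≥0) ^ (2*s) * ‖f k‖₊^2 : ℝ≥0) : ℝ) := by
    intro k
    rw [NNReal.coe_mul, NNReal.coe_rpow, NNReal.coe_pow, coe_nnnorm]
    unfold wtp
    rw [NNReal.coe_natCast, hb k]
  have h2 : ∀ k : ℤ, ((((1 + 2*k.natAbs : ℕ) : ℝ≥0) ^ (2*s) * ‖f k‖₊^2 : ℝ≥0) : ℝ≥0∞)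
      = WW k ^ (2*s) * (eN f k)^2 := by
    intro k
    rw [ENNReal.coe_mul, ENNReal.coe_pow,
      ENNReal.coe_rpow_of_ne_zero (by positivity : ((1 + 2*k.natAbs : ℕ) : ℝ≥0) ≠ 0)]
    simp only [WW, eN]
    norm_cast
  constructor
  · intro h
    rw [← tsum_congr h2]
    rw [ENNReal.tsum_coe_ne_top_iff_summable, ← NNReal.summable_coe]
    exact h.congr fun k => (h1 k)
  · intro h
    rw [← tsum_congr h2, ENNReal.tsum_coe_ne_top_iff_summable, ← NNReal.summable_coe] at h
    exact h.congr fun k => (h1 k).symm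

end Reg

theorem regularity (m : ℕ) (hm : 1 ≤ m) (α : ℝ) (hα0 : 0 ≤ α) (hα1 : α ≤ 1)
    (V u : ℤ → ℂ)
    (hV : Summable fun k : ℤ => wtp (-(m * α)) k * ‖V k‖ ^ 2)
    (hu : Summable fun k : ℤ => wtp (m : ℝ) k * ‖u k‖ ^ 2)
    (hSu : Summable fun k : ℤ =>
      ‖((2 * Real.pi * (k : ℝ)) ^ (2 * m) : ℝ) * u k + conv V u k‖ ^ 2) :
    Summable fun k : ℤ => wtp (m * (2 - α)) k * ‖u k‖ ^ 2 := by
  open Reg in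
  classical
  have hm1 : (1:ℝ) ≤ (m:ℝ) := by exact_mod_cast hm
  set σ : ℝ := (m:ℝ) * α with hσ_def
  have hσ0 : 0 ≤ σ := by positivity
  have hσm : σ ≤ (m:ℝ) := by nlinarith
  -- convert hypotheses to ENNReal form
  rw [Reg.summable_iff_tsum_ne_top] at hV hu
  rw [Reg.summable_iff_tsum_ne_top]
  have hV' : ∑' k, WW k ^ (-(2*σ)) * (eN V k)^2 ≠ ⊤ := by
    have he : 2 * (-((m:ℝ) * α)) = -(2*σ) := by rw [hσ_def]; ring
    rw [← he]
    exact hV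
  have hSu' : ∑' k : ℤ, (eN (fun k : ℤ =>
      (((2 * Real.pi * (k : ℝ)) ^ (2 * m) : ℝ) : ℂ) * u k + conv V u k) k)^2 ≠ ⊤ := by
    have h0 : Summable (fun k : ℤ => wtp 0 k * ‖(fun k : ℤ =>
        (((2 * Real.pi * (k : ℝ)) ^ (2 * m) : ℝ) : ℂ) * u k + conv V u k) k‖ ^ 2) := by
      refine hSu.congr fun k => ?_
      unfold wtp
      norm_num
    rw [Reg.summable_iff_tsum_ne_top] at h0
    refine fun htop => h0 ?_
    rw [← htop]
    refine tsum_congr fun k => ?_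
    norm_num
  set s₁ : ℝ := max σ (3/5) with hs₁_def
  have hs₁0 : 0 ≤ s₁ := le_trans (by norm_num) (le_max_right _ _)
  have hs₁m : s₁ ≤ (m:ℝ) := max_le hσm (by linarith)
  have hV₁ : ∑' k, WW k ^ (-(2*s₁)) * (eN V k)^2 ≠ ⊤ := by
    refine ne_top_of_le_ne_top hV' (ENNReal.tsum_le_tsum fun k => ?_)
    have hle : WW k ^ (-(2*s₁)) ≤ WW k ^ (-(2*σ)) := WW_mono_exp k (by
      have : σ ≤ s₁ := le_max_left _ _
      linarith)
    exact mul_le_mul_left hle _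
  have step1 := Reg.step m V u s₁ (m:ℝ) hs₁0 hs₁m hm1
    (Or.inl (lt_of_lt_of_le (by norm_num) (le_max_right σ (3/5)))) hV₁ hu hSu'
  set t₂ : ℝ := 2*(m:ℝ) - s₁ with ht₂_def
  have hd₂ : 1/2 < σ ∨ 1/2 < t₂ - σ := by
    by_cases hσ : 1/2 < σ
    · exact Or.inl hσ
    · right
      push_neg at hσ
      have hs₁eq : s₁ = 3/5 := max_eq_right (by linarith)
      rw [ht₂_def, hs₁eq]
      linarith
  have step2 := Reg.step m V u σ t₂ hσ0 (by rw [ht₂_def]; linarith) (by rw [ht₂_def]; linarith)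
    hd₂ hV' step1 hSu'
  have he2 : 2 * ((m:ℝ) * (2 - α)) = 2*(2*(m:ℝ) - σ) := by rw [hσ_def]; ring
  rw [he2]
  exact step2
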